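/- Let N be a structure in a relational language and let φ(x̄, y) be a formula (with y a single variable) in the language of N expanded by additional unary predicates. Suppose that for every integer k there exist tuples m̄_1, …, m̄_k of elements of N, elements a_{ij} ∈ N for 1 ≤ i < j ≤ k, and an expansion N⁺ of N interpreting the unary predicates, such that for all ℓ ∈ [k] and all 1 ≤ i < j ≤ k: N⁺ ⊨ φ(m̄_ℓ, a_{ij}) if and only if ℓ ∈ {i, j}. Then N is not monadically dependent. Moreover, if φ is an existential formula then N is not existentially monadically dependent. -/

import Mathlib

open FirstOrder FirstOrder.Language

/-- First-order languages with symbol types in `Type 0`. -/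
abbrev Lang : Type 1 := FirstOrder.Language.{0,0}

namespace MS

/-! ### Expansions by unary predicates -/

/-- Relation symbols for a language consisting of countably many unary predicates. -/
inductive unaryRel : ℕ → Type
  | pred : ℕ → unaryRel 1

/-- The language consisting of countably many unary predicate symbols. -/
def unaryLang : Lang := ⟨fun _ => Empty, unaryRel⟩

/-- Interpreting the unary predicates by a family `U` of subsets of `M`
(a monadic lift / unary expansion). -/
def unaryStructure {M : Type} (U : ℕ → Set M) : unaryLang.Structure M where
  funMap := fun {_} f _ => Empty.elim f
  RelMap := fun {_} r x => match r with | .pred i => x 0 ∈ U i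

/-! ### Induced substructures and elementary subsets (for relational languages) -/

/-- The induced `L`-structure on a subset `A` of a relational `L`-structure. -/
def inducedStr (L : Lang) (hrel : L.IsRelational) {N : Type} (s : L.Structure N)
    (A : Set N) : L.Structure A where
  funMap := fun {n} f _ => ((hrel n).elim f)
  RelMap := fun {_} R x => s.RelMap R (fun i => (x i : N))

/-- `A` induces an elementary substructure of the relational structure `(N, s)`:
every first-order formula evaluated at a tuple from `A` has the same truth value in the
induced structure on `A` and in the big structure.  (This is `A ⪯ N`.) -/
def IsElemSub (L : Lang) (hrel : L.IsRelational) {N : Type} (s : L.Structure N)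
    (A : Set N) : Prop :=
  ∀ (n : ℕ) (φ : L.Formula (Fin n)) (x : Fin n → A),
    (letI := inducedStr L hrel s A; φ.Realize x) ↔
    (letI := s; φ.Realize (fun i => (x i : N)))

/-- A set of vertices induces an elementary substructure of a graph
(the graph being viewed as a first-order structure). -/
def GraphIsElemSub {V : Type} (H : SimpleGraph V) (A : Set V) : Prop :=
  ∀ (n : ℕ) (φ : Language.graph.Formula (Fin n)) (x : Fin n → A),
    (letI := (SimpleGraph.induce A H).structure; φ.Realize x) ↔
    (letI := H.structure; φ.Realize (fun i => (x i : V)))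

/-! ### Gaifman graphs, walks -/

/-- The Gaifman graph of a relational structure: distinct elements are adjacent iff
they occur together in some tuple of some relation. -/
def gaif (L : Lang) {N : Type} (s : L.Structure N) : SimpleGraph N where
  Adj u v := u ≠ v ∧ ∃ (n : ℕ) (R : L.Relations n) (x : Fin n → N),
    s.RelMap R x ∧ (∃ i, x i = u) ∧ (∃ j, x j = v)
  symm := ⟨fun _ _ ⟨hne, n, R, x, hR, hu, hv⟩ => ⟨hne.symm, n, R, x, hR, hv, hu⟩⟩
  loopless := ⟨fun _ h => h.1 rfl⟩

/-- `a` and `b` are at distance `> r` in `G`: every walk between them is longer than `r`. -/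
def FarApart {V : Type} (G : SimpleGraph V) (r : ℕ) (a b : V) : Prop :=
  ∀ p : G.Walk a b, r < p.length

/-- The ball of radius `r` around `a` in the Gaifman graph. -/
def ballSet (L : Lang) {N : Type} (s : L.Structure N) (r : ℕ) (a : N) : Set N :=
  {v | ∃ p : (gaif L s).Walk a v, p.length ≤ r}

/-! ### Flips of relational structures -/

/-- The `n`-ary relation `Rel` on `N` is definable by a quantifier-free formula of `L`
with parameters from `S`. -/
def QFDefinable (L : Lang) {N : Type} (s : L.Structure N) (S : Set N)
    (n : ℕ) (Rel : (Fin n → N) → Prop) : Prop :=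
  ∃ (k : ℕ) (φ : L.Formula (Fin n ⊕ Fin k)) (params : Fin k → N),
    φ.IsQF ∧ (∀ i, params i ∈ S) ∧
    ∀ x : Fin n → N, Rel x ↔ (letI := s; φ.Realize (Sum.elim x params))

/-- `(N, s')` is an `S`-flip of `(N, s)`: each relation of either structure is
quantifier-free definable in the other with parameters from `S`
(and the new language is again finite relational). -/
def IsFlip (L L' : Lang) {N : Type} (s : L.Structure N) (s' : L'.Structure N)
    (S : Set N) : Prop :=
  L'.IsRelational ∧ Finite (Σ n, L'.Relations n) ∧
  (∀ (n : ℕ) (R : L'.Relations n), QFDefinable L s S n (fun x => s'.RelMap R x)) ∧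
  (∀ (n : ℕ) (R : L.Relations n), QFDefinable L' s' S n (fun x => s.RelMap R x))

/-- `a ⫝_S^r b` for relational structures: some `S`-flip has no path of length `≤ r`
between `a` and `b` in its Gaifman graph, or `a = b ∈ S`. -/
def FlipIndepStruct (L : Lang) {N : Type} (s : L.Structure N)
    (S : Set N) (r : ℕ) (a b : N) : Prop :=
  (a = b ∧ a ∈ S) ∨
  ∃ (L' : Lang) (s' : L'.Structure N),
    IsFlip L L' s s' S ∧ FarApart (gaif L' s') r a b

/-- `X ⫝_S^r Y` for sets: some `S`-flip has no path of length `≤ r` in its Gaifman graph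
connecting an element of `X ∖ S` with an element of `Y`, nor an element of `X` with an
element of `Y ∖ S`. -/
def FlipIndepSetStruct (L : Lang) {N : Type} (s : L.Structure N)
    (S X Y : Set N) (r : ℕ) : Prop :=
  ∃ (L' : Lang) (s' : L'.Structure N), IsFlip L L' s s' S ∧
    ∀ x ∈ X, ∀ y ∈ Y, (x ∉ S ∨ y ∉ S) → FarApart (gaif L' s') r x y

/-! ### Flips of graphs -/

/-- Two vertices have the same atomic type over `S` in the graph `H`. -/
def SameAtomicType {V : Type} (H : SimpleGraph V) (S : Set V) (u v : V) : Prop :=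
  ∀ s ∈ S, (u = s ↔ v = s) ∧ (H.Adj u s ↔ H.Adj v s)

/-- `H'` is an `S`-definable flip of the graph `H`: between any two classes of the
partition of the vertices into atomic types over `S`, the adjacency relation is either
kept or complemented wholesale. -/
def IsDefFlip {V : Type} (H H' : SimpleGraph V) (S : Set V) : Prop :=
  ∀ a b a' b' : V, a ≠ b → a' ≠ b' →
    SameAtomicType H S a a' → SameAtomicType H S b b' →
    ((H.Adj a b ↔ H'.Adj a b) ↔ (H.Adj a' b' ↔ H'.Adj a' b'))

/-- `a ⫝_B^r c` for graphs: there are a finite `B' ⊆ B` and a `B'`-definable flip `H'`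
of `H` with `dist_{H'}(a, c) > r`. -/
def FlipIndepGraph {V : Type} (H : SimpleGraph V) (B : Set V) (r : ℕ) (a c : V) : Prop :=
  ∃ B' : Set V, B' ⊆ B ∧ B'.Finite ∧
    ∃ H' : SimpleGraph V, IsDefFlip H H' B' ∧ FarApart H' r a c

/-! ### Forking independence (finite satisfiability over a model) -/

/-- `tp(u / Ms ∪ {v})` is finitely satisfiable in `Ms`: every first-order formula with
parameters from `Ms ∪ {v}` satisfied by `u` is satisfied by some element of `Ms`. -/
def FinSatOver (L : Lang) {N : Type} (s : L.Structure N) (Ms : Set N) (u v : N) : Prop :=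
  ∀ (n : ℕ) (φ : L.Formula (Fin n ⊕ Fin 2)) (params : Fin n → N),
    (∀ i, params i ∈ Ms) →
    (letI := s; φ.Realize (Sum.elim params ![u, v])) →
    ∃ u' ∈ Ms, (letI := s; φ.Realize (Sum.elim params ![u', v]))

/-! ### Stability and dependence notions -/

/-- The partitioned formula `φ(x̄; ȳ)` is stable in the structure `(N, s)`:
for some `k` there is no half-graph of order `k` defined by `φ`. -/
def StablePartFormula (L : Lang) {N : Type} (s : L.Structure N) {p q : ℕ}
    (φ : L.Formula (Fin p ⊕ Fin q)) : Prop :=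
  ∃ k : ℕ, ¬ ∃ (a : Fin k → Fin p → N) (b : Fin k → Fin q → N),
    ∀ i j : Fin k, (letI := s; φ.Realize (Sum.elim (a i) (b j))) ↔ i ≤ j

/-- A structure is atomic-stable if every atomic formula, under every partition of its
free variables, is stable in it. -/
def AtomicStable (L : Lang) {N : Type} (s : L.Structure N) : Prop :=
  ∀ (p q : ℕ) (φ : L.Formula (Fin p ⊕ Fin q)), φ.IsAtomic → StablePartFormula L s φ

/-- A structure is stable if every partitioned first-order formula is stable in it. -/
def StableStruct (L : Lang) {N : Type} (s : L.Structure N) : Prop :=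
  ∀ (p q : ℕ) (φ : L.Formula (Fin p ⊕ Fin q)), StablePartFormula L s φ

/-- A single structure is monadically stable: no formula in the language expanded by
unary predicates can define arbitrarily long linear orders in unary expansions. -/
def MonStableStruct (L : Lang) {N : Type} (s : L.Structure N) : Prop :=
  ¬ ∃ φ : (L.sum unaryLang).Formula (Fin 2),
    ∀ n : ℕ, ∃ (U : ℕ → Set N) (v : Fin n → N),
      ∀ i j : Fin n,
        (letI := s; letI := unaryStructure U; φ.Realize ![v i, v j]) ↔ i ≤ j

/-- A single structure is monadically dependent. -/
def MonDepStruct (L : Lang) {N : Type} (s : L.Structure N) : Prop :=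
  ¬ ∃ (m m' : ℕ) (φ : (L.sum unaryLang).Formula (Fin m ⊕ Fin m')),
    ∀ k : ℕ, ∃ (U : ℕ → Set N) (a : Fin k → Fin m → N)
      (b : Finset (Fin k) → Fin m' → N),
      ∀ (i : Fin k) (J : Finset (Fin k)),
        (letI := s; letI := unaryStructure U;
          φ.Realize (Sum.elim (a i) (b J))) ↔ i ∈ J

/-- A single structure is existentially monadically dependent. -/
def ExistMonDepStruct (L : Lang) {N : Type} (s : L.Structure N) : Prop :=
  ¬ ∃ (m m' : ℕ) (φ : (L.sum unaryLang).Formula (Fin m ⊕ Fin m')),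
    φ.IsExistential ∧
    ∀ k : ℕ, ∃ (U : ℕ → Set N) (a : Fin k → Fin m → N)
      (b : Finset (Fin k) → Fin m' → N),
      ∀ (i : Fin k) (J : Finset (Fin k)),
        (letI := s; letI := unaryStructure U;
          φ.Realize (Sum.elim (a i) (b J))) ↔ i ∈ J

/-! ### Classes of structures -/

/-- A class of `L`-structures (with domain in `Type 0`). -/
abbrev StructClass (L : Lang) : Type 1 := Set (Σ N : Type, L.Structure N)

/-- A class of structures is monadically stable. -/
def MonStableClass (L : Lang) (C : StructClass L) : Prop :=
  ¬ ∃ φ : (L.sum unaryLang).Formula (Fin 2),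
    ∀ n : ℕ, ∃ A ∈ C, ∃ (U : ℕ → Set A.1) (v : Fin n → A.1),
      ∀ i j : Fin n,
        (letI := A.2; letI := unaryStructure U; φ.Realize ![v i, v j]) ↔ i ≤ j

/-- A class of structures is monadically dependent. -/
def MonDepClass (L : Lang) (C : StructClass L) : Prop :=
  ¬ ∃ (m m' : ℕ) (φ : (L.sum unaryLang).Formula (Fin m ⊕ Fin m')),
    ∀ k : ℕ, ∃ A ∈ C, ∃ (U : ℕ → Set A.1) (a : Fin k → Fin m → A.1)
      (b : Finset (Fin k) → Fin m' → A.1),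
      ∀ (i : Fin k) (J : Finset (Fin k)),
        (letI := A.2; letI := unaryStructure U;
          φ.Realize (Sum.elim (a i) (b J))) ↔ i ∈ J

/-- A class of structures is existentially monadically dependent. -/
def ExistMonDepClass (L : Lang) (C : StructClass L) : Prop :=
  ¬ ∃ (m m' : ℕ) (φ : (L.sum unaryLang).Formula (Fin m ⊕ Fin m')),
    φ.IsExistential ∧
    ∀ k : ℕ, ∃ A ∈ C, ∃ (U : ℕ → Set A.1) (a : Fin k → Fin m → A.1)
      (b : Finset (Fin k) → Fin m' → A.1),
      ∀ (i : Fin k) (J : Finset (Fin k)),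
        (letI := A.2; letI := unaryStructure U;
          φ.Realize (Sum.elim (a i) (b J))) ↔ i ∈ J

/-- The partitioned formula `φ` is stable in the class `C`. -/
def StablePartFormulaClass (L : Lang) (C : StructClass L) {p q : ℕ}
    (φ : L.Formula (Fin p ⊕ Fin q)) : Prop :=
  ∃ k : ℕ, ∀ A ∈ C, ¬ ∃ (a : Fin k → Fin p → A.1) (b : Fin k → Fin q → A.1),
    ∀ i j : Fin k, (letI := A.2; φ.Realize (Sum.elim (a i) (b j))) ↔ i ≤ j

/-- A class of structures is atomic-stable. -/
def AtomicStableClass (L : Lang) (C : StructClass L) : Prop :=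
  ∀ (p q : ℕ) (φ : L.Formula (Fin p ⊕ Fin q)), φ.IsAtomic → StablePartFormulaClass L C φ

/-- The theory of a class: all sentences true in every member. -/
def Thy (L : Lang) (C : StructClass L) : Set (L.Sentence) :=
  {σ | ∀ A ∈ C, (letI := A.2; Sentence.Realize A.1 σ)}

/-- The elementary closure of a class: all models of its theory. -/
def ElemClosure (L : Lang) (C : StructClass L) : StructClass L :=
  {A | ∀ σ ∈ Thy L C, (letI := A.2; Sentence.Realize A.1 σ)}

/-- `A` is (isomorphic to) a weak substructure of `B`: the domain embeds and
relations are preserved. -/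
def IsWeakSub (L : Lang) (A B : Σ N : Type, L.Structure N) : Prop :=
  ∃ ι : A.1 → B.1, Function.Injective ι ∧
    ∀ (n : ℕ) (R : L.Relations n) (x : Fin n → A.1),
      A.2.RelMap R x → B.2.RelMap R (ι ∘ x)

/-- The monotone closure of a class of structures. -/
def MonotoneClosure (L : Lang) (C : StructClass L) : StructClass L :=
  {A | ∃ B ∈ C, IsWeakSub L A B}

/-! ### Graph containment notions -/

/-- `G` contains the complete bipartite graph `K_{t,t}` as a (not necessarily induced)
subgraph. -/
def HasBiclique {V : Type} (G : SimpleGraph V) (t : ℕ) : Prop :=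
  ∃ f : Fin t ⊕ Fin t → V, Function.Injective f ∧
    ∀ i j : Fin t, G.Adj (f (Sum.inl i)) (f (Sum.inr j))

/-- `G` contains some `≤ r`-subdivision of the complete graph `K_t` as a subgraph:
there are `t` distinct principal vertices joined by pairwise internally-disjoint paths
of length at most `r + 1` avoiding the principal vertices internally. -/
def HasSubdivClique {V : Type} (G : SimpleGraph V) (r t : ℕ) : Prop :=
  ∃ v : Fin t → V, Function.Injective v ∧
    ∃ p : ∀ i j : Fin t, G.Walk (v i) (v j),
      (∀ i j, i ≠ j → (p i j).IsPath ∧ (p i j).length ≤ r + 1) ∧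
      (∀ i j k, i ≠ j → v k ∈ (p i j).support → k = i ∨ k = j) ∧
      (∀ i j k l, i ≠ j → k ≠ l → ¬(i = k ∧ j = l) → ¬(i = l ∧ j = k) →
        ∀ x, x ∈ (p i j).support → x ∈ (p k l).support → x ∈ Set.range v)

/-! ### Separability, separation rank, flip-flatness -/

/-- The structure `(A, sA)` is `r`-separable: in every elementary extension, every
element is radius-`r` flip independent from (the image of) `A` over `A`. -/
def RSeparable (L : Lang) {A : Type} (sA : L.Structure A) (r : ℕ) : Prop :=
  ∀ (N : Type) (sN : L.Structure N) (f : @ElementaryEmbedding L A N sA sN) (a : N),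
    a ∉ Set.range f.toFun →
    FlipIndepSetStruct L sN (Set.range f.toFun) {a} (Set.range f.toFun) r

/-- `SrkLe L s r k U S` expresses `srk_r(U / S) ≤ k` (separation rank at radius `r`). -/
def SrkLe (L : Lang) {N : Type} (s : L.Structure N) (r : ℕ) :
    ℕ → Set N → Set N → Prop
  | 0, U, S => U ⊆ S
  | (k+1), U, S => U ⊆ S ∨ ∃ t : N, ∀ v ∈ U,
      SrkLe L s r k (U ∩ {u | ¬ FlipIndepStruct L s (S ∪ {t}) r v u}) (S ∪ {t})

/-- A class of structures is flip-flat. -/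
def FlipFlat (L : Lang) (C : StructClass L) : Prop :=
  ∀ r : ℕ, ∃ k : ℕ, ∃ Ub : ℕ → ℕ, (∀ m : ℕ, ∃ n : ℕ, m ≤ Ub n) ∧
    ∀ A ∈ C, ∀ X : Finset A.1, ∃ S : Finset A.1, S.card ≤ k ∧
      ∃ (L' : Lang) (s' : L'.Structure A.1),
        IsFlip L L' A.2 s' (↑S) ∧
        ∃ Y : Finset A.1, Y ⊆ X ∧ Ub X.card ≤ Y.card ∧
          ∀ a ∈ Y, ∀ b ∈ Y, a ≠ b → FarApart (gaif L' s') r a b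

end MS


open FirstOrder.Language.BoundedFormula

namespace MDAux
variable {L : FirstOrder.Language.{0,0}} {α β : Type}

theorem isExistential_castLE {l : ℕ} {φ : L.BoundedFormula α l} (hφ : φ.IsExistential) :
    ∀ {n : ℕ} (h : l ≤ n), (φ.castLE h).IsExistential := by
  induction hφ with
  | of_isQF hq => exact fun h => (hq.castLE).isExistential
  | ex _ ih => exact fun h => (ih (Nat.add_le_add_right h 1)).ex

theorem isExistential_liftAt {k m : ℕ} {n : ℕ} {φ : L.BoundedFormula α n}
    (hφ : φ.IsExistential) : (φ.liftAt k m).IsExistential := by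
  induction hφ with
  | of_isQF hq => exact hq.liftAt.isExistential
  | ex _ ih => exact (isExistential_castLE ih (by omega)).ex

theorem isExistential_relabel {n : ℕ} (g : α → β ⊕ Fin n) {k : ℕ} {φ : L.BoundedFormula α k}
    (hφ : φ.IsExistential) : (φ.relabel g).IsExistential := by
  induction hφ with
  | of_isQF hq => exact (hq.relabel g).isExistential
  | ex _ ih => rw [relabel_ex]; exact ih.ex

theorem isExistential_on {L' : FirstOrder.Language.{0,0}} (g : L →ᴸ L') {n : ℕ}
    {φ : L.BoundedFormula α n} (hφ : φ.IsExistential) :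
    (g.onBoundedFormula φ).IsExistential := by
  have hQF : ∀ {n : ℕ} {ψ : L.BoundedFormula α n}, ψ.IsQF → (g.onBoundedFormula ψ).IsQF := by
    intro n ψ hψ
    induction hψ with
    | falsum => exact IsQF.falsum
    | of_isAtomic hA => cases hA with
      | equal t₁ t₂ => exact (IsAtomic.equal _ _).isQF
      | rel R ts => exact (IsAtomic.rel _ _).isQF
    | imp _ _ ih1 ih2 => exact ih1.imp ih2
  induction hφ with
  | of_isQF hq => exact (hQF hq).isExistential
  | ex _ ih => exact ih.ex

end MDAux


namespace MDAux
variable {L : FirstOrder.Language.{0,0}} {α : Type}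

theorem conj_qf {n : ℕ} {φ : L.BoundedFormula α n} (hφ : φ.IsExistential) :
    ∀ (θ : L.BoundedFormula α n), θ.IsQF →
    ∃ ψ : L.BoundedFormula α n, ψ.IsExistential ∧
      ∀ (M : Type) (sM : L.Structure M) (v : α → M) (xs : Fin n → M),
        (letI := sM; ψ.Realize v xs) ↔
          ((letI := sM; φ.Realize v xs) ∧ (letI := sM; θ.Realize v xs)) := by
  induction hφ with
  | @of_isQF n φ hq =>
      intro θ hθ
      exact ⟨φ ⊓ θ, (hq.inf hθ).isExistential, fun M sM v xs => realize_inf⟩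
  | @ex n φ _ ih =>
      intro θ hθ
      obtain ⟨ψ, hψE, hψ⟩ := ih (θ.liftAt 1 n) hθ.liftAt
      refine ⟨ψ.ex, hψE.ex, fun M sM v xs => ?_⟩
      letI := sM
      rw [realize_ex, realize_ex]
      constructor
      · rintro ⟨a, ha⟩
        obtain ⟨h1, h2⟩ := (hψ M sM v (Fin.snoc xs a)).mp ha
        rw [realize_liftAt_one_self, Fin.snoc_comp_castSucc] at h2
        exact ⟨⟨a, h1⟩, h2⟩
      · rintro ⟨⟨a, h1⟩, h2⟩
        refine ⟨a, (hψ M sM v (Fin.snoc xs a)).mpr ⟨h1, ?_⟩⟩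
        rw [realize_liftAt_one_self, Fin.snoc_comp_castSucc]
        exact h2

theorem conj_ex {n : ℕ} {φ₁ : L.BoundedFormula α n} (h₁ : φ₁.IsExistential) :
    ∀ {φ₂ : L.BoundedFormula α n}, φ₂.IsExistential →
    ∃ ψ : L.BoundedFormula α n, ψ.IsExistential ∧
      ∀ (M : Type) (sM : L.Structure M) (v : α → M) (xs : Fin n → M),
        (letI := sM; ψ.Realize v xs) ↔
          ((letI := sM; φ₁.Realize v xs) ∧ (letI := sM; φ₂.Realize v xs)) := by
  induction h₁ with
  | @of_isQF n φ hq =>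
      intro φ₂ h₂
      obtain ⟨ψ, hψE, hψ⟩ := conj_qf h₂ φ hq
      exact ⟨ψ, hψE, fun M sM v xs => (hψ M sM v xs).trans and_comm⟩
  | @ex n φ _ ih =>
      intro φ₂ h₂
      obtain ⟨ψ, hψE, hψ⟩ := ih (isExistential_liftAt h₂ (k := 1) (m := n))
      refine ⟨ψ.ex, hψE.ex, fun M sM v xs => ?_⟩
      letI := sM
      rw [realize_ex, realize_ex]
      constructor
      · rintro ⟨a, ha⟩
        obtain ⟨h1, h2⟩ := (hψ M sM v (Fin.snoc xs a)).mp ha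
        rw [realize_liftAt_one_self, Fin.snoc_comp_castSucc] at h2
        exact ⟨⟨a, h1⟩, h2⟩
      · rintro ⟨⟨a, h1⟩, h2⟩
        refine ⟨a, (hψ M sM v (Fin.snoc xs a)).mpr ⟨h1, ?_⟩⟩
        rw [realize_liftAt_one_self, Fin.snoc_comp_castSucc]
        exact h2

end MDAux

namespace MDAux

/-- The combined structure on `N` for `L.sum unaryLang`. -/
def sStr (L : Lang) {N : Type} (s : L.Structure N) (U : ℕ → Set N) :
    (L.sum MS.unaryLang).Structure N :=
  letI := s; letI := MS.unaryStructure U; inferInstance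

/-- Shifting the unary predicates up by one. -/
def shiftUnary : MS.unaryLang →ᴸ MS.unaryLang where
  onFunction := fun {_} f => f
  onRelation := fun {_} r => match r with | .pred i => .pred (i + 1)

def shiftL (L : Lang) : (L.sum MS.unaryLang) →ᴸ (L.sum MS.unaryLang) :=
  (LHom.id L).sumMap shiftUnary

theorem expShift (L : Lang) {N : Type} (s : L.Structure N) (U : ℕ → Set N) :
    @LHom.IsExpansionOn _ _ (shiftL L) N (sStr L s (fun n => U (n + 1))) (sStr L s U) := by
  refine @LHom.IsExpansionOn.mk _ _ (shiftL L) N (sStr L s (fun n => U (n + 1))) (sStr L s U)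
    ?_ ?_
  · intro n f x
    rcases f with f | f
    · rfl
    · exact f.elim
  · intro n r x
    rcases r with r | r
    · rfl
    · cases r; rfl

theorem realize_shift (L : Lang) {N : Type} (s : L.Structure N) (U : ℕ → Set N)
    {α : Type} (ψ : (L.sum MS.unaryLang).Formula α) (v : α → N) :
    (letI := sStr L s U; ((shiftL L).onFormula ψ).Realize v) ↔
    (letI := sStr L s (fun n => U (n + 1)); ψ.Realize v) :=
  @LHom.realize_onFormula _ _ N (sStr L s (fun n => U (n + 1))) α (sStr L s U) (shiftL L)
    (expShift L s U) ψ v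

end MDAux

namespace MDAux

/-- The body of the witnessing formula: `φ(x̄, z) ∧ φ(ȳ, z) ∧ P₀(z)`, with the unary
predicates of `φ` shifted up by one. -/
def bodyF (L : Lang) (m : ℕ) (φ : (L.sum MS.unaryLang).Formula (Fin m ⊕ Fin 1)) :
    (L.sum MS.unaryLang).BoundedFormula (Fin m ⊕ Fin m) 1 :=
  (BoundedFormula.relabel
      (Sum.elim (fun i => Sum.inl (Sum.inl i)) fun _ => Sum.inr 0) ((shiftL L).onFormula φ)) ⊓
  ((BoundedFormula.relabel
      (Sum.elim (fun i => Sum.inl (Sum.inr i)) fun _ => Sum.inr 0) ((shiftL L).onFormula φ)) ⊓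
    (Relations.boundedFormula₁ (Sum.inr (MS.unaryRel.pred 0)) (Term.var (Sum.inr 0))))

theorem realize_piece (L : Lang) {N : Type} (s : L.Structure N) {m : ℕ}
    (φ : (L.sum MS.unaryLang).Formula (Fin m ⊕ Fin 1)) (U' : ℕ → Set N)
    (g : Fin m ⊕ Fin 1 → (Fin m ⊕ Fin m) ⊕ Fin 1) (v' : Fin m ⊕ Fin m → N) (xs : Fin 1 → N) :
    (letI := sStr L s U';
      ((BoundedFormula.relabel g ((shiftL L).onFormula φ) :
        (L.sum MS.unaryLang).BoundedFormula (Fin m ⊕ Fin m) 1).Realize v' xs)) ↔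
    (letI := sStr L s (fun n => U' (n + 1)); φ.Realize (Sum.elim v' xs ∘ g)) := by
  letI := sStr L s U'
  rw [BoundedFormula.realize_relabel]
  have h0 : (xs ∘ Fin.natAdd 1 : Fin 0 → N) = default := funext fun i => i.elim0
  have h1 : (xs ∘ Fin.castAdd 0 : Fin 1 → N) = xs := rfl
  rw [h0, h1]
  exact realize_shift L s U' φ (Sum.elim v' xs ∘ g)

theorem realize_body (L : Lang) {N : Type} (s : L.Structure N) {m : ℕ}
    (φ : (L.sum MS.unaryLang).Formula (Fin m ⊕ Fin 1)) (U' : ℕ → Set N)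
    (v w : Fin m → N) (xs : Fin 1 → N) :
    (letI := sStr L s U'; (bodyF L m φ).Realize (Sum.elim v w) xs) ↔
      (xs 0 ∈ U' 0 ∧
        (letI := sStr L s (fun n => U' (n + 1)); φ.Realize (Sum.elim v fun _ => xs 0)) ∧
        (letI := sStr L s (fun n => U' (n + 1)); φ.Realize (Sum.elim w fun _ => xs 0))) := by
  letI := sStr L s U'
  rw [bodyF, BoundedFormula.realize_inf, BoundedFormula.realize_inf,
    realize_piece L s φ U' _ (Sum.elim v w) xs, realize_piece L s φ U' _ (Sum.elim v w) xs]
  have e1 : (Sum.elim (Sum.elim v w) xs ∘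
      (Sum.elim (fun i => Sum.inl (Sum.inl i)) fun _ => Sum.inr 0) : Fin m ⊕ Fin 1 → N) =
      Sum.elim v fun _ => xs 0 := by
    funext x
    rcases x with i | j
    · rfl
    · rfl
  have e2 : (Sum.elim (Sum.elim v w) xs ∘
      (Sum.elim (fun i => Sum.inl (Sum.inr i)) fun _ => Sum.inr 0) : Fin m ⊕ Fin 1 → N) =
      Sum.elim w fun _ => xs 0 := by
    funext x
    rcases x with i | j
    · rfl
    · rfl
  rw [e1, e2]
  have e3 : ((Relations.boundedFormula₁ (Sum.inr (MS.unaryRel.pred 0)) (Term.var (Sum.inr 0)) :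
      (L.sum MS.unaryLang).BoundedFormula (Fin m ⊕ Fin m) 1).Realize (Sum.elim v w) xs) ↔
      xs 0 ∈ U' 0 := by
    exact Iff.rfl
  rw [e3]
  tauto

end MDAux

namespace MDAux

theorem pattern (L : Lang) {N : Type} (s : L.Structure N) {m : ℕ}
    (φ : (L.sum MS.unaryLang).Formula (Fin m ⊕ Fin 1))
    (h : ∀ k : ℕ, ∃ (mt : Fin k → Fin m → N) (a : Fin k → Fin k → N) (U : ℕ → Set N),
      ∀ (l i j : Fin k), i < j →
        ((letI := s; letI := MS.unaryStructure U;
          φ.Realize (Sum.elim (mt l) (fun _ => a i j))) ↔ (l = i ∨ l = j)))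
    (ψ : (L.sum MS.unaryLang).Formula (Fin m ⊕ Fin m))
    (hψ : ∀ (U' : ℕ → Set N) (v w : Fin m → N),
      (letI := sStr L s U'; ψ.Realize (Sum.elim v w)) ↔
      ∃ z : N, z ∈ U' 0 ∧
        (letI := sStr L s (fun n => U' (n + 1)); φ.Realize (Sum.elim v fun _ => z)) ∧
        (letI := sStr L s (fun n => U' (n + 1)); φ.Realize (Sum.elim w fun _ => z))) :
    ∀ k : ℕ, ∃ (U : ℕ → Set N) (a : Fin k → Fin m → N) (b : Finset (Fin k) → Fin m → N),
      ∀ (i : Fin k) (J : Finset (Fin k)),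
        (letI := s; letI := MS.unaryStructure U;
          ψ.Realize (Sum.elim (a i) (b J))) ↔ i ∈ J := by
  intro k
  obtain ⟨mt, aa, U, hU⟩ := h (k + 2 ^ k)
  let e : Finset (Fin k) ≃ Fin (2 ^ k) := Fintype.equivFinOfCardEq (by simp)
  let row : Fin k → Fin (k + 2 ^ k) := Fin.castAdd (2 ^ k)
  let col : Finset (Fin k) → Fin (k + 2 ^ k) := fun J => Fin.natAdd k (e J)
  have hrowcol : ∀ (i : Fin k) (J : Finset (Fin k)), row i ≠ col J := by
    intro i J hEq
    have := congrArg Fin.val hEq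
    simp only [row, col, Fin.coe_castAdd, Fin.coe_natAdd] at this
    have := i.isLt
    omega
  have hrc : ∀ (i : Fin k) (J : Finset (Fin k)), row i < col J := by
    intro i J
    have := i.isLt
    simp only [Fin.lt_def, row, col, Fin.coe_castAdd, Fin.coe_natAdd]
    omega
  let P : Set N := {x | ∃ J : Finset (Fin k), ∃ i ∈ J, x = aa (row i) (col J)}
  let U' : ℕ → Set N := fun nn => Nat.casesOn nn P fun n => U n
  have hU' : ∀ (l i j : Fin (k + 2 ^ k)), i < j →
      ((letI := sStr L s (fun n => U' (n + 1));
        φ.Realize (Sum.elim (mt l) (fun _ => aa i j))) ↔ (l = i ∨ l = j)) := hU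
  refine ⟨U', fun i => mt (row i), fun J => mt (col J), ?_⟩
  intro i J
  have key : (letI := sStr L s U';
      ψ.Realize (Sum.elim (mt (row i)) (mt (col J)))) ↔
      ∃ z : N, z ∈ U' 0 ∧
        (letI := sStr L s (fun n => U' (n + 1)); φ.Realize (Sum.elim (mt (row i)) fun _ => z)) ∧
        (letI := sStr L s (fun n => U' (n + 1)); φ.Realize (Sum.elim (mt (col J)) fun _ => z)) :=
    hψ U' (mt (row i)) (mt (col J))
  refine key.trans ?_
  constructor
  · rintro ⟨z, hzP, h1, h2⟩
    obtain ⟨J', i', hi', rfl⟩ := hzP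
    have c1 := (hU' (row i) (row i') (col J') (hrc i' J')).mp h1
    have c2 := (hU' (col J) (row i') (col J') (hrc i' J')).mp h2
    have hii : i = i' := by
      rcases c1 with c1 | c1
      · have := congrArg Fin.val c1
        simp only [row, Fin.coe_castAdd] at this
        exact Fin.ext this
      · exact absurd c1 (hrowcol i J')
    have hJJ : J = J' := by
      rcases c2 with c2 | c2
      · exact absurd c2.symm (hrowcol i' J)
      · have := congrArg Fin.val c2
        simp only [col, Fin.coe_natAdd] at this
        exact e.injective (Fin.ext (by omega))
    rw [hii, hJJ]
    exact hi'
  · intro hiJ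
    refine ⟨aa (row i) (col J), ⟨J, i, hiJ, rfl⟩, ?_, ?_⟩
    · exact (hU' (row i) (row i) (col J) (hrc i J)).mpr (Or.inl rfl)
    · exact (hU' (col J) (row i) (col J) (hrc i J)).mpr (Or.inr rfl)

end MDAux

/-- Obstruction to monadic dependence: if for every `k` there are
tuples `m̄₁, …, m̄ₖ`, elements `a_{ij}` (`i < j`), and a unary expansion of `N` such
that `φ(m̄_ℓ, a_{ij})` holds iff `ℓ ∈ {i, j}`, then `N` is not monadically dependent;
if moreover `φ` is existential, `N` is not existentially monadically dependent. -/
theorem monadic_dependence_obstruction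
    (L : Lang) {N : Type} (s : L.Structure N)
    (m : ℕ) (φ : (L.sum MS.unaryLang).Formula (Fin m ⊕ Fin 1))
    (h : ∀ k : ℕ, ∃ (mt : Fin k → Fin m → N) (a : Fin k → Fin k → N) (U : ℕ → Set N),
      ∀ (l i j : Fin k), i < j →
        ((letI := s; letI := MS.unaryStructure U;
          φ.Realize (Sum.elim (mt l) (fun _ => a i j))) ↔ (l = i ∨ l = j))) :
    ¬ MS.MonDepStruct L s ∧
    (φ.IsExistential → ¬ MS.ExistMonDepStruct L s) := by
  have hex : ∀ (B : (L.sum MS.unaryLang).BoundedFormula (Fin m ⊕ Fin m) 1),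
      (∀ (U' : ℕ → Set N) (v' : Fin m ⊕ Fin m → N) (xs : Fin 1 → N),
        (letI := MDAux.sStr L s U'; B.Realize v' xs) ↔
        (letI := MDAux.sStr L s U'; (MDAux.bodyF L m φ).Realize v' xs)) →
      ∀ (U' : ℕ → Set N) (v w : Fin m → N),
        (letI := MDAux.sStr L s U'; Formula.Realize (B.ex) (Sum.elim v w)) ↔
        ∃ z : N, z ∈ U' 0 ∧
          (letI := MDAux.sStr L s (fun n => U' (n + 1)); φ.Realize (Sum.elim v fun _ => z)) ∧
          (letI := MDAux.sStr L s (fun n => U' (n + 1)); φ.Realize (Sum.elim w fun _ => z)) := by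
    intro B hB U' v w
    letI := MDAux.sStr L s U'
    have h1 : Formula.Realize (B.ex) (Sum.elim v w) ↔
        ∃ z : N, B.Realize (Sum.elim v w) (Fin.snoc default z) :=
      BoundedFormula.realize_ex
    rw [h1]
    constructor
    · rintro ⟨z, hz⟩
      rw [hB, MDAux.realize_body L s φ U' v w] at hz
      have h0 : (Fin.snoc (default : Fin 0 → N) z : Fin 1 → N) 0 = z := by simp [Fin.snoc]
      rw [h0] at hz
      exact ⟨z, hz.1, hz.2.1, hz.2.2⟩
    · rintro ⟨z, hz0, hz1, hz2⟩
      refine ⟨z, ?_⟩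
      rw [hB, MDAux.realize_body L s φ U' v w]
      have h0 : (Fin.snoc (default : Fin 0 → N) z : Fin 1 → N) 0 = z := by simp [Fin.snoc]
      rw [h0]
      exact ⟨hz0, hz1, hz2⟩
  constructor
  · intro hMD
    exact hMD ⟨m, m, (MDAux.bodyF L m φ).ex,
      MDAux.pattern L s φ h _ (hex _ (fun U' v' xs => Iff.rfl))⟩
  · intro hE hMD
    have hA1 : (BoundedFormula.relabel
        (Sum.elim (fun i => Sum.inl (Sum.inl i)) fun _ => Sum.inr 0 :
          Fin m ⊕ Fin 1 → (Fin m ⊕ Fin m) ⊕ Fin 1)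
        ((MDAux.shiftL L).onFormula φ)).IsExistential :=
      MDAux.isExistential_relabel _ (MDAux.isExistential_on _ hE)
    have hA2 : (BoundedFormula.relabel
        (Sum.elim (fun i => Sum.inl (Sum.inr i)) fun _ => Sum.inr 0 :
          Fin m ⊕ Fin 1 → (Fin m ⊕ Fin m) ⊕ Fin 1)
        ((MDAux.shiftL L).onFormula φ)).IsExistential :=
      MDAux.isExistential_relabel _ (MDAux.isExistential_on _ hE)
    have hP : (Relations.boundedFormula₁ (Sum.inr (MS.unaryRel.pred 0))
        (Term.var (Sum.inr 0)) :
        (L.sum MS.unaryLang).BoundedFormula (Fin m ⊕ Fin m) 1).IsQF :=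
      (BoundedFormula.IsAtomic.rel _ _).isQF
    obtain ⟨ψ₂, hψ₂E, hψ₂⟩ := MDAux.conj_qf hA2 _ hP
    obtain ⟨B, hBE, hB⟩ := MDAux.conj_ex hA1 hψ₂E
    have hBbody : ∀ (U' : ℕ → Set N) (v' : Fin m ⊕ Fin m → N) (xs : Fin 1 → N),
        (letI := MDAux.sStr L s U'; B.Realize v' xs) ↔
        (letI := MDAux.sStr L s U'; (MDAux.bodyF L m φ).Realize v' xs) := by
      intro U' v' xs
      letI := MDAux.sStr L s U'
      rw [MDAux.bodyF, BoundedFormula.realize_inf, BoundedFormula.realize_inf,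
        hB N _ v' xs, hψ₂ N _ v' xs]
    exact hMD ⟨m, m, B.ex, hBE.ex,
      MDAux.pattern L s φ h _ (hex _ hBbody)⟩
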